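/- arXiv:math-ph/0211078 — 2 statements merged into one kernel-verified Lean document; each statement's English description precedes it below -/
import Mathlib

section
/- The group of units of the monoid of causal linear automorphisms of a Lorentzian vector space (those causal maps whose inverse is also causal) is exactly the group of orthochronous conformal linear transformations, i.e., maps φ with φ*g = α g for some α > 0 and g(u₀, φ(u₀)) > 0. -/
open LinearMap (BilinForm)

variable {V : Type*} [AddCommGroup V] [Module ℝ V]

/-- `v` is a future-directed causal vector w.r.t. metric `g` and time orientation `u₀`. -/
def FD (g : BilinForm ℝ V) (u₀ v : V) : Prop :=
  0 ≤ g v v ∧ v ≠ 0 ∧ 0 < g u₀ v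

/-- `k` is a future-directed null vector. -/
def FDNull (g : BilinForm ℝ V) (u₀ k : V) : Prop :=
  g k k = 0 ∧ k ≠ 0 ∧ 0 < g u₀ k

/-- `g` is Lorentzian with signature `(+,-,…,-)` and time orientation given by the
timelike vector `u₀`: `g` is symmetric, `u₀` is timelike, and `g` is negative definite
on the orthogonal complement of `u₀`. -/
def IsLorentzian (g : BilinForm ℝ V) (u₀ : V) : Prop :=
  g.IsSymm ∧ 0 < g u₀ u₀ ∧ ∀ v, v ≠ 0 → g u₀ v = 0 → g v v < 0

/-- A map is causal if it sends future-directed causal vectors to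
future-directed causal vectors. -/
def CausalMap (g : BilinForm ℝ V) (u₀ : V) (φ : V → V) : Prop :=
  ∀ v, FD g u₀ v → FD g u₀ (φ v)

/-! ### Auxiliary lemmas -/

lemma aux_arith1 (a b c X Y P : ℝ) (hc : 0 < c) (hb : 0 < b) (hX : 0 ≤ X) (hY : 0 ≤ Y)
    (hCS : P^2 ≤ X*Y) (h1 : X ≤ a*a*c) (h2 : Y < b*b*c) (h3 : 0 < a*b*c + P)
    (ha : a < 0) : False := by
  have habc : 0 < -(a*b*c) := by nlinarith [mul_pos (mul_pos (neg_pos.2 ha) hb) hc]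
  have hP2 : (a*b*c)^2 < P^2 := by nlinarith
  have hac : 0 ≤ a*a*c := by nlinarith
  have h4 : X*Y ≤ (a*a*c)*(b*b*c) := mul_le_mul h1 h2.le hY hac
  nlinarith

lemma aux_exists_small (A B C D E : ℝ) (hA : 0 < A) (hD : 0 < D) :
    ∃ t : ℝ, 0 < t ∧ 0 < A - 2*t*B + t^2*C ∧ 0 < D - t*E := by
  refine ⟨min 1 (min (A/(2*|B|+|C|+1)) (D/(|E|+1))), ?_, ?_, ?_⟩
  · have h1 : (0:ℝ) < A/(2*|B|+|C|+1) := by positivity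
    have h2 : (0:ℝ) < D/(|E|+1) := by positivity
    simp [lt_min_iff, h1, h2]
  · set t := min 1 (min (A/(2*|B|+|C|+1)) (D/(|E|+1))) with ht
    have ht0 : 0 < t := by
      have h1 : (0:ℝ) < A/(2*|B|+|C|+1) := by positivity
      have h2 : (0:ℝ) < D/(|E|+1) := by positivity
      simp [ht, lt_min_iff, h1, h2]
    have ht1 : t ≤ 1 := min_le_left _ _
    have ht2 : t ≤ A/(2*|B|+|C|+1) := le_trans (min_le_right _ _) (min_le_left _ _)
    have hd : (0:ℝ) < 2*|B|+|C|+1 := by positivity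
    have ht2' : t * (2*|B|+|C|+1) ≤ A := by
      rw [div_eq_mul_inv] at ht2
      calc t * (2*|B|+|C|+1) ≤ (A * (2*|B|+|C|+1)⁻¹) * (2*|B|+|C|+1) :=
            mul_le_mul_of_nonneg_right ht2 hd.le
        _ = A := by field_simp
    have hB : B ≤ |B| := le_abs_self B
    have hB' : -|B| ≤ B := neg_abs_le B
    have hC' : -|C| ≤ C := neg_abs_le C
    nlinarith [mul_le_mul_of_nonneg_left hB (by positivity : (0:ℝ) ≤ 2*t),
      mul_le_mul_of_nonneg_left hC' (sq_nonneg t),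
      mul_nonneg (mul_nonneg (sub_nonneg.2 ht1) ht0.le) (abs_nonneg C)]
  · set t := min 1 (min (A/(2*|B|+|C|+1)) (D/(|E|+1))) with ht
    have ht0 : 0 < t := by
      have h1 : (0:ℝ) < A/(2*|B|+|C|+1) := by positivity
      have h2 : (0:ℝ) < D/(|E|+1) := by positivity
      simp [ht, lt_min_iff, h1, h2]
    have ht3 : t ≤ D/(|E|+1) := le_trans (min_le_right _ _) (min_le_right _ _)
    have hd : (0:ℝ) < |E|+1 := by positivity
    have ht3' : t * (|E|+1) ≤ D := by
      rw [div_eq_mul_inv] at ht3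
      calc t * (|E|+1) ≤ (D * (|E|+1)⁻¹) * (|E|+1) :=
            mul_le_mul_of_nonneg_right ht3 hd.le
        _ = D := by field_simp
    have hE : E ≤ |E| := le_abs_self E
    nlinarith

/-- Cauchy–Schwarz on the negative-definite complement of `u₀`. -/
lemma aux_cs (g : BilinForm ℝ V) (u₀ : V) (hL : IsLorentzian g u₀)
    (x y : V) (hx : g u₀ x = 0) (hy : g u₀ y = 0) :
    (g x y)^2 ≤ g x x * g y y := by
  obtain ⟨hsymm, hc, hneg⟩ := hL
  have hW : ∀ z : V, g u₀ z = 0 → g z z ≤ 0 := by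
    intro z hz
    rcases eq_or_ne z 0 with rfl | h
    · simp
    · exact (hneg z h hz).le
  have key : ∀ t : ℝ, 0 ≤ (-(g y y)) * (t*t) + (-(2 * g x y)) * t + (-(g x x)) := by
    intro t
    have h1 : g u₀ (x + t • y) = 0 := by
      simp [map_add, map_smul, smul_eq_mul, hx, hy]
    have h2 := hW _ h1
    have hxy : g y x = g x y := hsymm.eq y x
    have hexp : g (x + t • y) (x + t • y)
        = g x x + t * g x y + t * g y x + t * t * g y y := by
      simp [map_add, map_smul, LinearMap.add_apply, LinearMap.smul_apply, smul_eq_mul]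
      ring
    rw [hexp, hxy] at h2
    nlinarith
  have := discrim_le_zero key
  rw [discrim] at this
  nlinarith

/-- Orthogonal decomposition of `v` along `u₀`. -/
lemma aux_decomp (g : BilinForm ℝ V) (u₀ : V) (hL : IsLorentzian g u₀) (v : V) :
    ∃ (a : ℝ) (x : V), v = a • u₀ + x ∧ g u₀ x = 0 ∧ g x u₀ = 0 ∧
      a * g u₀ u₀ = g u₀ v ∧
      g v v = a * a * g u₀ u₀ + g x x := by
  obtain ⟨hsymm, hc, hneg⟩ := hL
  refine ⟨g u₀ v / g u₀ u₀, v - (g u₀ v / g u₀ u₀) • u₀, by abel, ?_, ?_, ?_, ?_⟩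
  · simp only [map_sub, map_smul, smul_eq_mul]
    field_simp
    ring
  · rw [← hsymm.eq u₀]
    simp only [map_sub, map_smul, smul_eq_mul, RingHom.id_apply]
    field_simp
    ring
  · field_simp
  · have hux : g u₀ (v - (g u₀ v / g u₀ u₀) • u₀) = 0 := by
      simp only [map_sub, map_smul, smul_eq_mul]
      field_simp
      ring
    have hxu : g (v - (g u₀ v / g u₀ u₀) • u₀) u₀ = 0 := by
      rw [← hsymm.eq u₀]; exact hux
    have h : v = (g u₀ v / g u₀ u₀) • u₀ + (v - (g u₀ v / g u₀ u₀) • u₀) := by abel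
    conv_lhs => rw [h]
    simp only [map_add, map_smul, LinearMap.add_apply, LinearMap.smul_apply,
      smul_eq_mul, hux, hxu]
    ring

/-- Sign lemma: a future-directed timelike vector `w` sees causal vectors with the
same sign as `u₀` does. -/
lemma aux_sign (g : BilinForm ℝ V) (u₀ : V) (hL : IsLorentzian g u₀)
    (w v : V) (hww : 0 < g w w) (huw : 0 < g u₀ w)
    (hvv : 0 ≤ g v v) (hv : v ≠ 0) (hwv : 0 < g w v) : 0 < g u₀ v := by
  obtain ⟨a, x, hax, hux, hxu, hac, hexp1⟩ := aux_decomp g u₀ hL v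
  obtain ⟨b, y, hby, huy, hyu, hbc, hexp2⟩ := aux_decomp g u₀ hL w
  obtain ⟨hsymm, hc, hneg⟩ := hL
  have hxx : g x x ≤ 0 := by
    rcases eq_or_ne x 0 with h | h
    · simp [h]
    · exact (hneg x h hux).le
  have hyy : g y y ≤ 0 := by
    rcases eq_or_ne y 0 with h | h
    · simp [h]
    · exact (hneg y h huy).le
  have hb : 0 < b := by
    have := mul_pos huw hc
    rw [← hbc] at this
    nlinarith
  have hexp3 : g w v = a*b*(g u₀ u₀) + g y x := by
    conv_lhs => rw [hby, hax]
    simp only [map_add, map_smul, LinearMap.add_apply, LinearMap.smul_apply,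
      smul_eq_mul, hux, huy, hxu, hyu]
    ring
  have hCS : (g y x)^2 ≤ (-(g y y)) * (-(g x x)) := by
    have := aux_cs g u₀ ⟨hsymm, hc, hneg⟩ y x huy hux
    nlinarith
  have ha : 0 < a := by
    rcases lt_trichotomy a 0 with h | h | h
    · exact absurd (aux_arith1 a b (g u₀ u₀) (-(g x x)) (-(g y y)) (g y x) hc hb
        (by linarith) (by linarith)
        (by nlinarith) (by nlinarith) (by nlinarith) (by nlinarith) h) not_false
    · exfalso
      subst h
      have hgvv : g v v = g x x := by rw [hexp1]; ring
      have hx0 : g x x = 0 := le_antisymm hxx (hgvv ▸ hvv)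
      have hxne : x ≠ 0 := by
        intro h0
        apply hv
        rw [hax, h0]; simp
      exact absurd (hneg x hxne hux) (by rw [hx0]; simp)
    · exact h
  rw [← hac]
  exact mul_pos ha hc

/-- A conformal orthochronous linear equivalence is causal. -/
lemma aux_conf_causal (g : BilinForm ℝ V) (u₀ : V) (hL : IsLorentzian g u₀)
    (ψ : V ≃ₗ[ℝ] V) (α : ℝ) (hα : 0 < α)
    (hconf : ∀ u v, g (ψ u) (ψ v) = α * g u v)
    (horth : 0 < g u₀ (ψ u₀)) : CausalMap g u₀ ψ := by
  rintro v ⟨hvv, hv0, huv⟩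
  have hψv : (ψ : V → V) v ≠ 0 := by
    intro h
    exact hv0 (by simpa using congrArg ψ.symm h)
  refine ⟨?_, hψv, ?_⟩
  · rw [hconf]
    exact mul_nonneg hα.le hvv
  · refine aux_sign g u₀ hL (ψ u₀) (ψ v) ?_ horth ?_ hψv ?_
    · rw [hconf]
      exact mul_pos hα hL.2.1
    · rw [hconf]
      exact mul_nonneg hα.le hvv
    · rw [hconf]
      exact mul_pos hα huv

/-- Causal equivalences (with causal inverse) kill the squared norm of
future null vectors. -/
lemma aux_null_pres (g : BilinForm ℝ V) (u₀ : V) (hL : IsLorentzian g u₀)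
    (φ : V ≃ₗ[ℝ] V) (hφ : CausalMap g u₀ φ) (hψ : CausalMap g u₀ φ.symm)
    (k : V) (hk : FDNull g u₀ k) : g (φ k) (φ k) = 0 := by
  obtain ⟨hkk, hk0, huk⟩ := hk
  obtain ⟨hsymm, hc, hneg⟩ := hL
  have hkFD : FD g u₀ k := ⟨hkk.ge, hk0, huk⟩
  obtain ⟨hA0, hφk0, hD0⟩ := hφ k hkFD
  by_contra hne
  have hA : 0 < g (φ k) (φ k) := lt_of_le_of_ne hA0 (Ne.symm hne)
  obtain ⟨a, x, hax, hux, hxu, hac, hexp⟩ := aux_decomp g u₀ ⟨hsymm, hc, hneg⟩ k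
  have ha : 0 < a := by nlinarith [hac ▸ huk]
  have hxne : x ≠ 0 := by
    intro h0
    rw [h0] at hexp
    simp only [map_zero, LinearMap.zero_apply, add_zero] at hexp
    nlinarith [hexp ▸ hkk]
  have hxx : g x x = -(a*a*(g u₀ u₀)) := by
    have := hexp ▸ hkk
    linarith [hexp.symm.trans hkk]
  -- the "opposite" future null vector
  have hgkv : g k ((2*a) • u₀ - k) = 2*a*a*(g u₀ u₀) := by
    conv_lhs => rw [hax]
    simp only [map_add, map_smul, map_sub, LinearMap.add_apply, LinearMap.sub_apply,
      LinearMap.smul_apply, smul_eq_mul, hux, hxu]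
    nlinarith [hxx]
  have hgvv : g ((2*a) • u₀ - k) ((2*a) • u₀ - k) = 0 := by
    conv_lhs => rw [hax]
    simp only [map_add, map_smul, map_sub, LinearMap.add_apply, LinearMap.sub_apply,
      LinearMap.smul_apply, smul_eq_mul, hux, hxu]
    nlinarith [hxx]
  set v : V := (2*a) • u₀ - k with hv
  obtain ⟨t, ht0, hq, hh⟩ := aux_exists_small (g (φ k) (φ k)) (g (φ k) (φ v))
    (g (φ v) (φ v)) (g u₀ (φ k)) (g u₀ (φ v)) hA hD0
  have hφm : (φ : V → V) (k - t • v) = φ k - t • φ v := by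
    simp [map_sub, map_smul]
  have hmm : g (k - t • v) (k - t • v) = -(4*t*a*a*(g u₀ u₀)) := by
    have hvk : g v k = g k v := hsymm.eq v k
    simp only [map_sub, map_smul, LinearMap.sub_apply, LinearMap.smul_apply,
      smul_eq_mul]
    rw [hvk, hgkv, hgvv, hkk]
    ring
  have hFDφm : FD g u₀ ((φ : V → V) (k - t • v)) := by
    rw [hφm]
    have e1 : g (φ k - t • φ v) (φ k - t • φ v)
        = g (φ k) (φ k) - 2*t*(g (φ k) (φ v)) + t^2*(g (φ v) (φ v)) := by
      have hsk : g (φ v) (φ k) = g (φ k) (φ v) := hsymm.eq (φ v) (φ k)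
      simp only [map_sub, map_smul, LinearMap.sub_apply, LinearMap.smul_apply,
        smul_eq_mul]
      rw [hsk]
      ring
    have e2 : g u₀ (φ k - t • φ v) = g u₀ (φ k) - t * (g u₀ (φ v)) := by
      simp [map_sub, map_smul, smul_eq_mul]
    refine ⟨by rw [e1]; linarith, ?_, by rw [e2]; linarith⟩
    intro h0
    rw [h0] at e2
    simp only [map_zero] at e2
    linarith [e2]
  have := hψ _ hFDφm
  rw [LinearEquiv.symm_apply_apply] at this
  have h1 := this.1
  rw [hmm] at h1
  nlinarith [mul_pos (mul_pos (mul_pos ht0 ha) ha) hc]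

/-- the units of the monoid of causal automorphisms are exactly the
orthochronous conformal transformations. -/
theorem units_of_causal_monoid [FiniteDimensional ℝ V]
    (hdim : 2 ≤ Module.finrank ℝ V)
    (g : BilinForm ℝ V) (u₀ : V) (hL : IsLorentzian g u₀) :
    ∀ φ : V ≃ₗ[ℝ] V,
      (CausalMap g u₀ φ ∧ CausalMap g u₀ φ.symm) ↔
        ((∃ α : ℝ, 0 < α ∧ ∀ u v, g (φ u) (φ v) = α * g u v) ∧
          0 < g u₀ (φ u₀)) := by
  obtain ⟨hsymm, hc, hneg⟩ := hL
  have hL' : IsLorentzian g u₀ := ⟨hsymm, hc, hneg⟩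
  intro φ
  constructor
  · rintro ⟨hφ, hψ⟩
    -- u₀ is future directed
    have hu0ne : u₀ ≠ 0 := by
      intro h
      rw [h] at hc
      simp at hc
    have hu0FD : FD g u₀ u₀ := ⟨hc.le, hu0ne, hc⟩
    obtain ⟨hφu0, hφu0ne, horth⟩ := hφ u₀ hu0FD
    refine ⟨?_, horth⟩
    set l : ℝ := g (φ u₀) (φ u₀) / g u₀ u₀ with hl
    -- key: behaviour on the orthogonal complement
    have key : ∀ w : V, g u₀ w = 0 →
        g (φ u₀) (φ w) = 0 ∧ g (φ w) (φ w) = l * g w w := by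
      intro w hw
      rcases eq_or_ne w 0 with rfl | hwne
      · simp
      · have hww : g w w < 0 := hneg w hwne hw
        have hwu : g w u₀ = 0 := by rw [← hsymm.eq u₀ w]; exact hw
        have hpos : (0:ℝ) < -(g w w)/(g u₀ u₀) := div_pos (by linarith) hc
        obtain ⟨s, hs0, hs2⟩ : ∃ s : ℝ, 0 < s ∧ s*s*(g u₀ u₀) = -(g w w) := by
          refine ⟨Real.sqrt (-(g w w)/(g u₀ u₀)), Real.sqrt_pos.2 hpos, ?_⟩
          rw [Real.mul_self_sqrt hpos.le]
          field_simp
        -- the two future null vectors s•u₀ ± w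
        have hnull : ∀ ε : ℝ, ε = 1 ∨ ε = -1 → FDNull g u₀ (s • u₀ + ε • w) := by
          intro ε hε
          have h1 : g u₀ (s • u₀ + ε • w) = s * (g u₀ u₀) := by
            simp [map_add, map_smul, smul_eq_mul, hw]
          have h2 : g (s • u₀ + ε • w) (s • u₀ + ε • w)
              = s*s*(g u₀ u₀) + ε*ε*(g w w) := by
            simp only [map_add, map_smul, LinearMap.add_apply, LinearMap.smul_apply,
              smul_eq_mul, hw, hwu]
            ring
          have hε2 : ε*ε = 1 := by rcases hε with h|h <;> rw [h] <;> ring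
          refine ⟨by rw [h2, hε2]; linarith, ?_, by rw [h1]; exact mul_pos hs0 hc⟩
          intro h0
          rw [h0] at h1
          simp only [map_zero] at h1
          nlinarith [mul_pos hs0 hc]
        have hn1 := aux_null_pres g u₀ ⟨hsymm, hc, hneg⟩ φ hφ hψ _ (hnull 1 (Or.inl rfl))
        have hn2 := aux_null_pres g u₀ ⟨hsymm, hc, hneg⟩ φ hφ hψ _ (hnull (-1) (Or.inr rfl))
        have hBsymm : g (φ w) (φ u₀) = g (φ u₀) (φ w) := hsymm.eq (φ w) (φ u₀)
        have e1 : ∀ ε : ℝ, g (φ (s • u₀ + ε • w)) (φ (s • u₀ + ε • w))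
            = s*s*(g (φ u₀) (φ u₀)) + 2*s*ε*(g (φ u₀) (φ w)) + ε*ε*(g (φ w) (φ w)) := by
          intro ε
          simp only [map_add, map_smul, LinearMap.add_apply, LinearMap.smul_apply,
            smul_eq_mul, hBsymm]
          ring
        rw [e1 1] at hn1
        rw [e1 (-1)] at hn2
        have hB0 : g (φ u₀) (φ w) = 0 := by nlinarith
        constructor
        · exact hB0
        · have : s*s*(g (φ u₀) (φ u₀)) + g (φ w) (φ w) = 0 := by nlinarith
          rw [hl]
          field_simp
          nlinarith [hs2]
    have hB00 : g (φ u₀) (φ u₀) = l * g u₀ u₀ := by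
      rw [hl]; field_simp
    have keyW : ∀ x y : V, g u₀ x = 0 → g u₀ y = 0 →
        g (φ x) (φ y) = l * g x y := by
      intro x y hx hy
      have hxy := (key (x+y) (by simp [map_add, hx, hy])).2
      have hxx := (key x hx).2
      have hyy := (key y hy).2
      have hsy : g y x = g x y := hsymm.eq y x
      have hsBy : g (φ y) (φ x) = g (φ x) (φ y) := hsymm.eq _ _
      have e : g (φ (x+y)) (φ (x+y))
          = g (φ x) (φ x) + 2 * g (φ x) (φ y) + g (φ y) (φ y) := by
        simp only [map_add, LinearMap.add_apply, hsBy]; ring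
      have e2 : g (x+y) (x+y) = g x x + 2 * g x y + g y y := by
        simp only [map_add, LinearMap.add_apply, hsy]; ring
      rw [e, e2] at hxy
      linear_combination (hxy - hxx - hyy) / 2
    have hconfall : ∀ u v, g (φ u) (φ v) = l * g u v := by
      intro u v
      obtain ⟨a, x, hax, hux, hxu, _, _⟩ := aux_decomp g u₀ hL' u
      obtain ⟨b, y, hby, huy, hyu, _, _⟩ := aux_decomp g u₀ hL' v
      have hB0y : g (φ u₀) (φ y) = 0 := (key y huy).1
      have hBx0 : g (φ x) (φ u₀) = 0 := by
        have hs : g (φ x) (φ u₀) = g (φ u₀) (φ x) := hsymm.eq _ _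
        rw [hs]
        exact (key x hux).1
      have hBxy : g (φ x) (φ y) = l * g x y := keyW x y hux huy
      have eL : g (φ u) (φ v) = a*b*(g (φ u₀) (φ u₀)) + a*(g (φ u₀) (φ y))
          + b*(g (φ x) (φ u₀)) + g (φ x) (φ y) := by
        conv_lhs => rw [hax, hby]
        simp only [map_add, map_smul, LinearMap.add_apply, LinearMap.smul_apply,
          smul_eq_mul]
        ring
      have eR : g u v = a*b*(g u₀ u₀) + a*(g u₀ y) + b*(g x u₀) + g x y := by
        conv_lhs => rw [hax, hby]
        simp only [map_add, map_smul, LinearMap.add_apply, LinearMap.smul_apply,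
          smul_eq_mul]
        ring
      rw [eL, eR, hB0y, hBx0, hBxy, hB00, huy, hxu]
      ring
    have hlnn : 0 ≤ l := div_nonneg hφu0 hc.le
    have hlne : l ≠ 0 := by
      intro h0
      have h1 := hconfall (φ.symm u₀) (φ.symm u₀)
      rw [LinearEquiv.apply_symm_apply, h0, zero_mul] at h1
      exact absurd h1 (ne_of_gt hc)
    exact ⟨l, lt_of_le_of_ne hlnn (Ne.symm hlne), hconfall⟩
  · rintro ⟨⟨α, hα, hconf⟩, horth⟩
    refine ⟨aux_conf_causal g u₀ hL' φ α hα hconf horth, ?_⟩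
    have hconf' : ∀ u v, g (φ.symm u) (φ.symm v) = α⁻¹ * g u v := by
      intro u v
      have := hconf (φ.symm u) (φ.symm v)
      rw [LinearEquiv.apply_symm_apply, LinearEquiv.apply_symm_apply] at this
      field_simp [this]
      rw [this]; ring
    have horth' : 0 < g u₀ (φ.symm u₀) := by
      have h := hconf u₀ (φ.symm u₀)
      rw [LinearEquiv.apply_symm_apply] at h
      have h2 : g (φ u₀) u₀ = g u₀ (φ u₀) := hsymm.eq (φ u₀) u₀
      nlinarith
    exact aux_conf_causal g u₀ hL' φ.symm α⁻¹ (by positivity) hconf' horth'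
end

section
/- Let (φ_s) be a one-parameter group of linear automorphisms of a Lorentzian vector space that are causal for s ≥ 0, and let k be a future-directed null vector. If φ_{s₀}(k) is null for some s₀ > 0, then φ_s(k) is null for all s ∈ [0, s₀]. -/
open LinearMap (BilinForm)

variable {V : Type*} [AddCommGroup V] [Module ℝ V]

lemma timelike_map (g : BilinForm ℝ V) (u₀ : V) (hL : IsLorentzian g u₀)
    (φ : V ≃ₗ[ℝ] V) (hc : CausalMap g u₀ φ)
    (v : V) (hv : 0 < g v v) (hu : 0 < g u₀ v) :
    0 < g (φ v) (φ v) := by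
  obtain ⟨hsymm, hT, _⟩ := hL
  have hvne : v ≠ 0 := by rintro rfl; simp at hu
  have hFDv : FD g u₀ v := ⟨hv.le, hvne, hu⟩
  obtain ⟨hge, hne, hp⟩ := hc v hFDv
  rcases hge.lt_or_eq with h | h
  · exact h
  exfalso
  set w := φ.symm u₀ with hw
  have hφw : φ w = u₀ := φ.apply_symm_apply u₀
  set a : ℝ := g v v
  set b : ℝ := g v w + g w v
  set c : ℝ := g w w
  set p' : ℝ := g u₀ v
  set q' : ℝ := g u₀ w
  set p : ℝ := g u₀ (φ v)
  set T : ℝ := g u₀ u₀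
  -- find ε < 0 with  0 < a + b ε + c ε²,  0 < p' + q' ε,  0 < 2p + T ε
  have h1 : ∀ᶠ ε in nhdsWithin (0:ℝ) (Set.Iio 0), 0 < a + b*ε + c*ε^2 := by
    have : ContinuousAt (fun ε : ℝ => a + b*ε + c*ε^2) 0 := by fun_prop
    have := this.eventually (eventually_gt_nhds (by simpa using hv : (0:ℝ) < a + b*0 + c*0^2))
    exact nhdsWithin_le_nhds this
  have h2 : ∀ᶠ ε in nhdsWithin (0:ℝ) (Set.Iio 0), 0 < p' + q'*ε := by
    have : ContinuousAt (fun ε : ℝ => p' + q'*ε) 0 := by fun_prop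
    have := this.eventually (eventually_gt_nhds (by simpa using hu : (0:ℝ) < p' + q'*0))
    exact nhdsWithin_le_nhds this
  have h3 : ∀ᶠ ε in nhdsWithin (0:ℝ) (Set.Iio 0), 0 < 2*p + T*ε := by
    have : ContinuousAt (fun ε : ℝ => 2*p + T*ε) 0 := by fun_prop
    have := this.eventually (eventually_gt_nhds (by simpa using hp : (0:ℝ) < 2*p + T*0))
    exact nhdsWithin_le_nhds this
  have h4 : ∀ᶠ ε in nhdsWithin (0:ℝ) (Set.Iio 0), ε < 0 :=
    eventually_mem_nhdsWithin.mono (fun ε hε => hε)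
  obtain ⟨ε, ⟨hε1, hε2⟩, hε3, hε4⟩ := ((h1.and h2).and (h3.and h4)).exists
  -- v + ε • w is FD
  have hexp : g (v + ε • w) (v + ε • w) = a + b*ε + c*ε^2 := by
    simp [map_add, map_smul, smul_eq_mul]; ring
  have hexpu : g u₀ (v + ε • w) = p' + q'*ε := by
    simp [map_add, map_smul, smul_eq_mul]; ring
  have hFD : FD g u₀ (v + ε • w) := by
    refine ⟨by rw [hexp]; exact hε1.le, ?_, by rw [hexpu]; exact hε2⟩
    rintro h0
    rw [h0] at hexpu
    simp at hexpu
    nlinarith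
  obtain ⟨hge', _, _⟩ := hc _ hFD
  have hmap : φ (v + ε • w) = φ v + ε • u₀ := by
    rw [map_add, map_smul, hφw]
  rw [hmap] at hge'
  have hexp2 : g (φ v + ε • u₀) (φ v + ε • u₀) = 2*p*ε + T*ε^2 := by
    have hsy : g (φ v) u₀ = g u₀ (φ v) := by
      simpa using (hsymm.eq (φ v) u₀)
    simp [map_add, map_smul, smul_eq_mul, hsy, ← h]; ring
  rw [hexp2] at hge'
  nlinarith

/-- if `φ_{s₀}(k)` is null for some `s₀ > 0` then `φ_s(k)` is null
for all `s ∈ [0, s₀]`. -/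
theorem null_preserved_in_between [FiniteDimensional ℝ V]
    (g : BilinForm ℝ V) (u₀ : V) (hL : IsLorentzian g u₀)
    (φ : ℝ → V ≃ₗ[ℝ] V)
    (hgrp : ∀ s t : ℝ, ∀ v : V, φ (s + t) v = φ s (φ t v))
    (h0 : ∀ v : V, φ 0 v = v)
    (hcausal : ∀ s, 0 ≤ s → CausalMap g u₀ (φ s))
    (k : V) (hk : FDNull g u₀ k)
    (s₀ : ℝ) (hs₀ : 0 < s₀) (hnull : g (φ s₀ k) (φ s₀ k) = 0) :
    ∀ s, 0 ≤ s → s ≤ s₀ → g (φ s k) (φ s k) = 0 := by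
  intro s hs hss
  have hFDk : FD g u₀ k := ⟨hk.1.ge, hk.2.1, hk.2.2⟩
  obtain ⟨hge, hne, hp⟩ := hcausal s hs k hFDk
  rcases hge.eq_or_lt with h | h
  · exact h.symm
  exfalso
  have hpos := timelike_map g u₀ hL (φ (s₀ - s)) (hcausal _ (by linarith)) (φ s k) h hp
  have : φ (s₀ - s) (φ s k) = φ s₀ k := by
    rw [← hgrp (s₀ - s) s k]; ring_nf
  rw [this, hnull] at hpos
  exact lt_irrefl 0 hpos
end
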